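/- arXiv:1403.3622 — 5 statements merged into one kernel-verified Lean document; each statement's English description precedes it below -/
import Mathlib

section
/- Let τ be a fuzzy soft topology. For any family {g_λ}_{λ∈Λ} of semiopen fuzzy soft sets, the pointwise supremum ⋁_{λ∈Λ} g_λ is a semiopen fuzzy soft set. -/
open unitInterval

instance : Fact ((0:ℝ) ≤ 1) := ⟨zero_le_one⟩

/-- A fuzzy soft set over universe `U` with parameter set `E`. -/
def FuzzySoftSet (E U : Type*) : Type _ := E → U → unitInterval

noncomputable instance {E U : Type*} : CompleteLattice (FuzzySoftSet E U) :=
  inferInstanceAs (CompleteLattice (E → U → unitInterval))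

/-- Complement of a fuzzy soft set: `f^c e x = 1 - f e x`. -/
def FuzzySoftSet.compl {E U : Type*} (f : FuzzySoftSet E U) : FuzzySoftSet E U :=
  fun e x => unitInterval.symm (f e x)

/-- A fuzzy soft topology: contains the constant-0 and constant-1 fuzzy soft sets,
is closed under pairwise pointwise minimum, and under pointwise suprema of subfamilies. -/
structure FuzzySoftTopology (E U : Type*) where
  opens : Set (FuzzySoftSet E U)
  bot_mem : (⊥ : FuzzySoftSet E U) ∈ opens
  top_mem : (⊤ : FuzzySoftSet E U) ∈ opens
  inf_mem : ∀ g h : FuzzySoftSet E U, g ∈ opens → h ∈ opens → g ⊓ h ∈ opens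
  sSup_mem : ∀ s : Set (FuzzySoftSet E U), s ⊆ opens → sSup s ∈ opens

namespace FuzzySoftTopology

variable {E U : Type*}

/-- `g` is an open fuzzy soft set. -/
def IsOpen (t : FuzzySoftTopology E U) (g : FuzzySoftSet E U) : Prop := g ∈ t.opens

/-- `g` is a closed fuzzy soft set: its complement is open. -/
def IsClosed (t : FuzzySoftTopology E U) (g : FuzzySoftSet E U) : Prop := t.IsOpen g.compl

/-- Interior: supremum of all open fuzzy soft sets below `g`. -/
noncomputable def interior (t : FuzzySoftTopology E U) (g : FuzzySoftSet E U) : FuzzySoftSet E U :=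
  sSup {h | t.IsOpen h ∧ h ≤ g}

/-- Closure: infimum of all closed fuzzy soft sets above `g`. -/
noncomputable def closure (t : FuzzySoftTopology E U) (g : FuzzySoftSet E U) : FuzzySoftSet E U :=
  sInf {h | t.IsClosed h ∧ g ≤ h}

/-- `g` is semiopen: there is an open `h` with `h ≤ g ≤ cl h`. -/
def SemiOpen (t : FuzzySoftTopology E U) (g : FuzzySoftSet E U) : Prop :=
  ∃ h : FuzzySoftSet E U, t.IsOpen h ∧ h ≤ g ∧ g ≤ t.closure h

/-- `g` is semiclosed: there is a closed `k` with `int k ≤ g ≤ k`. -/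
def SemiClosed (t : FuzzySoftTopology E U) (g : FuzzySoftSet E U) : Prop :=
  ∃ k : FuzzySoftSet E U, t.IsClosed k ∧ t.interior k ≤ g ∧ g ≤ k

/-- Fuzzy soft semi-closure: infimum of all semiclosed fuzzy soft sets above `g`. -/
noncomputable def sscl (t : FuzzySoftTopology E U) (g : FuzzySoftSet E U) : FuzzySoftSet E U :=
  sInf {s | t.SemiClosed s ∧ g ≤ s}

/-- Fuzzy soft semi-interior: supremum of all semiopen fuzzy soft sets below `g`. -/
noncomputable def ssint (t : FuzzySoftTopology E U) (g : FuzzySoftSet E U) : FuzzySoftSet E U :=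
  sSup {s | t.SemiOpen s ∧ s ≤ g}

end FuzzySoftTopology

/-- A fuzzy soft point: nonzero at exactly one parameter. -/
def FuzzySoftSet.IsPoint {E U : Type*} (p : FuzzySoftSet E U) : Prop :=
  ∃ e₀ : E, p e₀ ≠ (fun _ => 0) ∧ ∀ e : E, e ≠ e₀ → p e = fun _ => 0

namespace FuzzySoftTopology

variable {E U : Type*} (t : FuzzySoftTopology E U)

theorem isOpen_iSup {ι : Sort*} {f : ι → FuzzySoftSet E U} (hf : ∀ i, t.IsOpen (f i)) :
    t.IsOpen (⨆ i, f i) :=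
  t.sSup_mem _ (Set.range_subset_iff.2 hf)

theorem closure_mono {g g' : FuzzySoftSet E U} (h : g ≤ g') : t.closure g ≤ t.closure g' :=
  sInf_le_sInf fun _ hk => ⟨hk.1, h.trans hk.2⟩

end FuzzySoftTopology

theorem sSup_semiOpen {E U : Type*} (t : FuzzySoftTopology E U)
    {Λ : Type*} (g : Λ → FuzzySoftSet E U)
    (hg : ∀ l : Λ, t.SemiOpen (g l)) :
    t.SemiOpen (⨆ l : Λ, g l) := by
  choose h hOpen hle hcl using hg
  exact ⟨⨆ l, h l, t.isOpen_iSup hOpen, iSup_mono hle,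
    iSup_le fun l => (hcl l).trans (t.closure_mono (le_iSup h l))⟩
end

section
/- Let τ be a fuzzy soft topology. For any family {g_λ}_{λ∈Λ} of semiclosed fuzzy soft sets, the pointwise infimum ⋀_{λ∈Λ} g_λ is a semiclosed fuzzy soft set. -/
open unitInterval

namespace FuzzySoftSet

variable {E U : Type*}

noncomputable def complOrderIso : FuzzySoftSet E U ≃o (FuzzySoftSet E U)ᵒᵈ where
  toFun f := OrderDual.toDual f.compl
  invFun f := (OrderDual.ofDual f).compl
  left_inv f := funext₂ fun _ _ => symm_symm _
  right_inv f := funext₂ fun _ _ => symm_symm _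
  map_rel_iff' := by
    intro f g
    change (∀ e x, σ (g e x) ≤ σ (f e x)) ↔ ∀ e x, f e x ≤ g e x
    simp only [symm_le_symm]

theorem compl_iInf {Λ : Type*} (k : Λ → FuzzySoftSet E U) :
    (⨅ l, k l).compl = ⨆ l, (k l).compl :=
  congrArg OrderDual.ofDual (complOrderIso.map_iInf k)

end FuzzySoftSet

namespace FuzzySoftTopology

variable {E U : Type*} (t : FuzzySoftTopology E U)

theorem isOpen_iSup_s1 {Λ : Type*} {g : Λ → FuzzySoftSet E U} (hg : ∀ l, t.IsOpen (g l)) :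
    t.IsOpen (⨆ l, g l) :=
  t.sSup_mem _ (Set.range_subset_iff.2 hg)

theorem isClosed_iInf {Λ : Type*} {k : Λ → FuzzySoftSet E U} (hk : ∀ l, t.IsClosed (k l)) :
    t.IsClosed (⨅ l, k l) := by
  rw [IsClosed, FuzzySoftSet.compl_iInf]
  exact t.isOpen_iSup_s1 hk

theorem interior_mono {a b : FuzzySoftSet E U} (h : a ≤ b) : t.interior a ≤ t.interior b :=
  sSup_le_sSup fun _ hs => ⟨hs.1, hs.2.trans h⟩

end FuzzySoftTopology

theorem sInf_semiClosed {E U : Type*} (t : FuzzySoftTopology E U)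
    {Λ : Type*} (g : Λ → FuzzySoftSet E U)
    (hg : ∀ l : Λ, t.SemiClosed (g l)) :
    t.SemiClosed (⨅ l : Λ, g l) := by
  choose k hk_closed hk_int hk_le using hg
  refine ⟨⨅ l, k l, t.isClosed_iInf hk_closed, le_iInf fun l => ?_, iInf_mono hk_le⟩
  exact (t.interior_mono (iInf_le k l)).trans (hk_int l)
end

section
/- Let τ be a fuzzy soft topology. If m is a semiclosed fuzzy soft set and k is a fuzzy soft set with int(m) ≤ k ≤ m, then k is a semiclosed fuzzy soft set. -/
open unitInterval

namespace FuzzySoftTopology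

variable {E U : Type*} (t : FuzzySoftTopology E U)

theorem isOpen_interior (g : FuzzySoftSet E U) : t.IsOpen (t.interior g) :=
  t.sSup_mem _ fun _ hh => hh.1

variable {t}

theorem IsOpen.le_interior {h g : FuzzySoftSet E U} (hh : t.IsOpen h) (hhg : h ≤ g) :
    h ≤ t.interior g :=
  le_sSup ⟨hh, hhg⟩

end FuzzySoftTopology

theorem semiClosed_of_between {E U : Type*} (t : FuzzySoftTopology E U)
    {m k : FuzzySoftSet E U} (hm : t.SemiClosed m)
    (h1 : t.interior m ≤ k) (h2 : k ≤ m) :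
    t.SemiClosed k := by
  obtain ⟨c, hc, hcm, hmc⟩ := hm
  have hcm_int : t.interior c ≤ t.interior m := (t.isOpen_interior c).le_interior hcm
  exact ⟨c, hc, hcm_int.trans h1, h2.trans hmc⟩
end

section
/- Let τ be a fuzzy soft topology. A fuzzy soft set g is semiopen if and only if for every fuzzy soft point p with p ≤ g there exists a semiopen fuzzy soft set h with p ≤ h ≤ g. -/
open unitInterval

/-
Semiopen fuzzy soft sets are closed under arbitrary suprema: the supremum of open kernels
`h_i ≤ g_i ≤ cl h_i` is an open kernel of `⨆ g_i`. Every fuzzy soft set is the supremum of the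
fuzzy soft points below it (one point per parameter at which it is nonzero). Under the pointwise
hypothesis, `g` is therefore the supremum of the semiopen sets below it, its semi-interior.
-/

namespace FuzzySoftSet

variable {E U : Type*}

open Classical in
theorem isPoint_single {e : E} {f : U → unitInterval} (hf : f ≠ 0) :
    IsPoint (Pi.single e f : FuzzySoftSet E U) :=
  ⟨e, by rw [Pi.single_eq_same]; exact hf, fun _ he => by rw [Pi.single_eq_of_ne he]; rfl⟩

open Classical in
theorem single_apply_le_self (g : FuzzySoftSet E U) (e : E) :
    (Pi.single e (g e) : FuzzySoftSet E U) ≤ g := by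
  intro e' x
  rcases eq_or_ne e' e with rfl | he
  · simp
  · simp [Pi.single_eq_of_ne he]

theorem sSup_points_eq (g : FuzzySoftSet E U) : sSup {p | IsPoint p ∧ p ≤ g} = g := by
  classical
  refine le_antisymm (sSup_le fun _ hp => hp.2) fun e => ?_
  by_cases hge : g e = 0
  · rw [hge]
    exact fun _ => unitInterval.nonneg'
  · simpa using le_sSup (s := {p | IsPoint p ∧ p ≤ g})
      ⟨isPoint_single hge, single_apply_le_self g e⟩ e

end FuzzySoftSet

namespace FuzzySoftTopology

variable {E U : Type*} (t : FuzzySoftTopology E U)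

theorem closure_mono_s4 {a b : FuzzySoftSet E U} (hab : a ≤ b) : t.closure a ≤ t.closure b :=
  sInf_le_sInf fun _ hk => ⟨hk.1, hab.trans hk.2⟩

theorem semiOpen_sSup {S : Set (FuzzySoftSet E U)} (hS : ∀ s ∈ S, t.SemiOpen s) :
    t.SemiOpen (sSup S) := by
  let kernels := {u | t.IsOpen u ∧ ∃ s ∈ S, u ≤ s ∧ s ≤ t.closure u}
  refine ⟨sSup kernels, t.sSup_mem _ fun _ hu => hu.1, sSup_le_sSup_of_isCofinalFor ?_, ?_⟩
  · rintro u ⟨-, s, hs, hus, -⟩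
    exact ⟨s, hs, hus⟩
  · refine sSup_le fun s hs => ?_
    obtain ⟨u, hu, hus, hsu⟩ := hS s hs
    exact hsu.trans (t.closure_mono_s4 (le_sSup ⟨hu, s, hs, hus, hsu⟩))

theorem semiOpen_ssint (g : FuzzySoftSet E U) : t.SemiOpen (t.ssint g) :=
  t.semiOpen_sSup fun _ hs => hs.1

theorem ssint_le (g : FuzzySoftSet E U) : t.ssint g ≤ g :=
  sSup_le fun _ hs => hs.2

end FuzzySoftTopology

theorem semiOpen_iff_points {E U : Type*} (t : FuzzySoftTopology E U)
    (g : FuzzySoftSet E U) :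
    t.SemiOpen g ↔
      ∀ p : FuzzySoftSet E U, p.IsPoint → p ≤ g →
        ∃ h : FuzzySoftSet E U, t.SemiOpen h ∧ p ≤ h ∧ h ≤ g := by
  refine ⟨fun hg p _ hpg => ⟨g, hg, hpg, le_rfl⟩, fun H => ?_⟩
  have hg_le : g ≤ t.ssint g := by
    conv_lhs => rw [← g.sSup_points_eq]
    refine sSup_le_sSup_of_isCofinalFor fun p ⟨hp, hpg⟩ => ?_
    obtain ⟨h, hh, hph, hhg⟩ := H p hp hpg
    exact ⟨h, ⟨hh, hhg⟩, hph⟩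
  simpa only [le_antisymm (t.ssint_le g) hg_le] using t.semiOpen_ssint g
end

section
/- Let τ be a fuzzy soft topology. For any fuzzy soft set g, sscl(sscl(g)) = sscl(g) and ssint(ssint(g)) = ssint(g). -/
open unitInterval

theorem sInf_setOf_and_le_idem {α : Type*} [CompleteLattice α] (p : α → Prop) (a : α) :
    sInf {s | p s ∧ sInf {s | p s ∧ a ≤ s} ≤ s} = sInf {s | p s ∧ a ≤ s} :=
  congrArg sInf <| Set.ext fun _ => and_congr_right fun hs =>
    ⟨(le_sInf fun _ h => h.2).trans, fun h => sInf_le ⟨hs, h⟩⟩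

theorem sSup_setOf_and_le_idem {α : Type*} [CompleteLattice α] (p : α → Prop) (a : α) :
    sSup {s | p s ∧ s ≤ sSup {s | p s ∧ s ≤ a}} = sSup {s | p s ∧ s ≤ a} :=
  sInf_setOf_and_le_idem (α := αᵒᵈ) p a

namespace FuzzySoftTopology

variable {E U : Type*} (t : FuzzySoftTopology E U) (g : FuzzySoftSet E U)

theorem sscl_sscl : t.sscl (t.sscl g) = t.sscl g :=
  sInf_setOf_and_le_idem t.SemiClosed g

theorem ssint_ssint : t.ssint (t.ssint g) = t.ssint g :=
  sSup_setOf_and_le_idem t.SemiOpen g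

end FuzzySoftTopology

theorem sscl_idem_and_ssint_idem {E U : Type*} (t : FuzzySoftTopology E U)
    (g : FuzzySoftSet E U) :
    t.sscl (t.sscl g) = t.sscl g ∧ t.ssint (t.ssint g) = t.ssint g :=
  ⟨t.sscl_sscl g, t.ssint_ssint g⟩
end
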